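/- The robust relative representation is invariant under scaled permutations with positive scales and shifts: with ẑ^B = Σ^{-1}(z−μ) the Gaussian normalization w.r.t. B (mean μ, diagonal std matrix Σ with positive entries), anchors A = {a_1,...,a_k}, and T_rob(z) = (cos-sim(ẑ^B, â_1^B), ..., cos-sim(ẑ^B, â_k^B)), if z, every a_i, and every element of B are transformed by z ↦ DPz + h where P is a permutation matrix, D diagonal with positive entries, and h ∈ ℝ^m, then T_rob computed in the transformed data equals T_rob computed in the original data. -/
import Mathlib

open Matrix

noncomputable def cwMean (N m : ℕ) (b : Fin N → Fin m → ℝ) (i : Fin m) : ℝ :=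
  (∑ k, b k i) / N

noncomputable def cwStd (N m : ℕ) (b : Fin N → Fin m → ℝ) (i : Fin m) : ℝ :=
  Real.sqrt ((∑ k, (b k i - cwMean N m b i) ^ 2) / N)

/-- Gaussian normalization `ẑ^B = Σ⁻¹(z - μ)` w.r.t. the family `b`. -/
noncomputable def gaussNorm (N m : ℕ) (b : Fin N → Fin m → ℝ) (z : Fin m → ℝ) :
    Fin m → ℝ :=
  fun i => (z i - cwMean N m b i) / cwStd N m b i

/-- Cosine similarity. -/
noncomputable def cosSim {m : ℕ} (u v : Fin m → ℝ) : ℝ :=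
  (u ⬝ᵥ v) / (Real.sqrt (u ⬝ᵥ u) * Real.sqrt (v ⬝ᵥ v))

lemma cwMean_transf (N m : ℕ) (hN : 0 < N) (b : Fin N → Fin m → ℝ)
    (π : Equiv.Perm (Fin m)) (d h : Fin m → ℝ) (j : Fin m) :
    cwMean N m (fun l j => d j * b l (π j) + h j) j
      = d j * cwMean N m b (π j) + h j := by
  have hN' : (N : ℝ) ≠ 0 := Nat.cast_ne_zero.mpr hN.ne'
  simp only [cwMean, Finset.sum_add_distrib, ← Finset.mul_sum, Finset.sum_const,
    Finset.card_univ, Fintype.card_fin, nsmul_eq_mul]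
  field_simp

lemma cwStd_transf (N m : ℕ) (hN : 0 < N) (b : Fin N → Fin m → ℝ)
    (π : Equiv.Perm (Fin m)) (d : Fin m → ℝ) (hd : ∀ i, 0 < d i) (h : Fin m → ℝ) (j : Fin m) :
    cwStd N m (fun l j => d j * b l (π j) + h j) j = d j * cwStd N m b (π j) := by
  unfold cwStd
  rw [cwMean_transf N m hN]
  have : ∀ l : Fin N, (d j * b l (π j) + h j - (d j * cwMean N m b (π j) + h j)) ^ 2
      = d j ^ 2 * (b l (π j) - cwMean N m b (π j)) ^ 2 := by intro l; ring
  simp_rw [this, ← Finset.mul_sum, mul_div_assoc,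
    Real.sqrt_mul (sq_nonneg _), Real.sqrt_sq (hd j).le]

lemma gaussNorm_transf (N m : ℕ) (hN : 0 < N) (b : Fin N → Fin m → ℝ)
    (π : Equiv.Perm (Fin m)) (d : Fin m → ℝ) (hd : ∀ i, 0 < d i) (h : Fin m → ℝ)
    (z : Fin m → ℝ) (j : Fin m) :
    gaussNorm N m (fun l j => d j * b l (π j) + h j) (fun j => d j * z (π j) + h j) j
      = gaussNorm N m b z (π j) := by
  unfold gaussNorm
  rw [cwMean_transf N m hN, cwStd_transf N m hN b π d hd h]
  have : d j * z (π j) + h j - (d j * cwMean N m b (π j) + h j)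
      = d j * (z (π j) - cwMean N m b (π j)) := by ring
  rw [this, mul_div_mul_left _ _ (hd j).ne']

lemma cosSim_perm {m : ℕ} (u v : Fin m → ℝ) (π : Equiv.Perm (Fin m)) :
    cosSim (fun j => u (π j)) (fun j => v (π j)) = cosSim u v := by
  unfold cosSim dotProduct
  rw [Equiv.sum_comp π (fun j => u j * v j), Equiv.sum_comp π (fun j => u j * u j),
    Equiv.sum_comp π (fun j => v j * v j)]

/-- The robust relative representation
`T_rob(z) = (cosSim(ẑ^B, â₁^B), …, cosSim(ẑ^B, â_k^B))` is invariant when `z`, the anchors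
`a i`, and every element of `B` are transformed by `z ↦ DPz + h`, with `P` the permutation
matrix of `π` (acting by `(Pz)ⱼ = z (π j)`), `D = diag d` with positive entries, `h ∈ ℝ^m`. -/
theorem robust_relative_invariant (N m k : ℕ) (hN : 0 < N)
    (b : Fin N → Fin m → ℝ) (hstd : ∀ i, cwStd N m b i ≠ 0)
    (a : Fin k → Fin m → ℝ) (z : Fin m → ℝ)
    (π : Equiv.Perm (Fin m)) (d : Fin m → ℝ) (hd : ∀ i, 0 < d i) (h : Fin m → ℝ)
    (hz : gaussNorm N m b z ≠ 0) (ha : ∀ i, gaussNorm N m b (a i) ≠ 0) :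
    ∀ i : Fin k,
      cosSim
        (gaussNorm N m (fun l j => d j * b l (π j) + h j) (fun j => d j * z (π j) + h j))
        (gaussNorm N m (fun l j => d j * b l (π j) + h j) (fun j => d j * a i (π j) + h j)) =
      cosSim (gaussNorm N m b z) (gaussNorm N m b (a i)) := by
  intro i
  have hz' : (gaussNorm N m (fun l j => d j * b l (π j) + h j) (fun j => d j * z (π j) + h j))
      = fun j => gaussNorm N m b z (π j) :=
    funext fun j => gaussNorm_transf N m hN b π d hd h z j
  have ha' : (gaussNorm N m (fun l j => d j * b l (π j) + h j) (fun j => d j * a i (π j) + h j))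
      = fun j => gaussNorm N m b (a i) (π j) :=
    funext fun j => gaussNorm_transf N m hN b π d hd h (a i) j
  rw [hz', ha', cosSim_perm]
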